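/- arXiv:1610.07649 — 3 statements merged into one kernel-verified Lean document; each statement's English description precedes it below -/
import Mathlib

section
/- Let (P, Q) be an itemset interval (P ⊆ Q, T(P) = T(Q)), let j be an item with j ∉ Q, let R = P ∪ {j}, and let R* be an itemset with R ⊆ R* and T(R*) = T(R). Then with S = R* ∪ Q, every itemset X with R ⊆ X ⊆ S satisfies T(X) = T(R); i.e., (R, S) is a valid itemset interval. -/
open Finset

variable {ι α : Type*}

/-- The cover of an itemset `X`: the set of transaction indices whose transaction contains `X`. -/
def cover [Fintype ι] [DecidableEq α] (T : ι → Finset α) (X : Finset α) : Finset ι :=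
  Finset.univ.filter fun t => X ⊆ T t

/-- The support of an itemset `X`: the number of transactions containing it. -/
def supp [Fintype ι] [DecidableEq α] (T : ι → Finset α) (X : Finset α) : ℕ :=
  (cover T X).card

/-- The closure of `X`: the intersection of all transactions containing `X`
(by convention the full item set if no transaction contains `X`). -/
def clos [Fintype ι] [Fintype α] [DecidableEq α] (T : ι → Finset α) (X : Finset α) : Finset α :=
  (cover T X).inf T

theorem stmt4 [Fintype ι] [DecidableEq α] (T : ι → Finset α) (P Q : Finset α)
    (hPQ : P ⊆ Q) (hcov : cover T P = cover T Q) (j : α) (hj : j ∉ Q)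
    (R : Finset α) (hR : R = insert j P)
    (Rstar : Finset α) (hRs : R ⊆ Rstar) (hRscov : cover T Rstar = cover T R)
    (S : Finset α) (hS : S = Rstar ∪ Q) :
    ∀ X : Finset α, R ⊆ X → X ⊆ S → cover T X = cover T R := by
  intro X hRX hXS
  ext t
  simp only [cover, mem_filter, mem_univ, true_and]
  constructor
  · intro h; exact hRX.trans h
  · intro h
    have hP : P ⊆ T t := fun a ha => h (hR ▸ mem_insert_of_mem ha)
    have htP : t ∈ cover T P := by simp [cover, hP]
    have hQ : Q ⊆ T t := by
      have := hcov ▸ htP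
      simpa [cover] using this
    have hRst : Rstar ⊆ T t := by
      have : t ∈ cover T R := by simp [cover, h]
      have := hRscov ▸ this
      simpa [cover] using this
    have hSsub : S ⊆ T t := by
      rw [hS]; exact union_subset hRst hQ
    exact hXS.trans hSsub
end

section
/- Fix a total order < on items and define tail(X) as the maximum element of a nonempty itemset X. If two itemset intervals (P₁, Q₁) and (P₂, Q₂) are generated by the ALPINE extension rule (each Pᵢ extends its parent's minimum itemset only by items j > tail(parent) with j ∉ parent's maximum itemset, and Qᵢ ⊇ Pᵢ contains all items e ∈ I(T(Pᵢ)) with e > tail(Pᵢ)), then the intervals {Y | P₁ ⊆ Y ⊆ Q₁} and {Y | P₂ ⊆ Y ⊆ Q₂} are disjoint for P₁ ≠ P₂; equivalently, every itemset is output in exactly one itemset interval. -/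
open Finset

variable {ι α : Type*}

/-- The extension closure `X* = X ∪ {e ∈ I(T(X)) | e > tail X}` (tail X = max X). -/
def ext [Fintype ι] [Fintype α] [LinearOrder α] (T : ι → Finset α) (X : Finset α) : Finset α :=
  X ∪ (clos T X).filter fun e => ∀ x ∈ X, x < e

/-- Nodes `(P, Q)` of ALPINE's enumeration tree: roots are `({i}, {i}*)`, and a node `(P, Q)`
has children `(P ∪ {j}, (P ∪ {j})* ∪ Q)` for `j > tail P` with `j ∉ Q`. -/
inductive AlNode [Fintype ι] [Fintype α] [LinearOrder α] (T : ι → Finset α) :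
    Finset α → Finset α → Prop where
  | root (i : α) : AlNode T {i} (ext T {i})
  | child {P Q : Finset α} (j : α) (h : AlNode T P Q) (hj : ∀ x ∈ P, x < j) (hjQ : j ∉ Q) :
      AlNode T (insert j P) (ext T (insert j P) ∪ Q)

section Aux

variable [Fintype ι] [Fintype α] [LinearOrder α] (T : ι → Finset α)

lemma clos_mono_aux {A B : Finset α} (hAB : A ⊆ B) : clos T A ⊆ clos T B := by
  have hcov : cover T B ⊆ cover T A := by
    intro t ht
    simp only [cover, mem_filter, mem_univ, true_and] at ht ⊢
    exact hAB.trans ht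
  exact Finset.le_iff_subset.mp (Finset.inf_mono hcov)

lemma ext_mono_aux {A B : Finset α} (hAB : A ⊆ B) {q : α}
    (hq : q ∈ ext T A) (hqB : q ∉ B) (hB : ∀ x ∈ B, x < q) : q ∈ ext T B := by
  rcases Finset.mem_union.1 hq with h | h
  · exact absurd (hAB h) hqB
  · rw [Finset.mem_filter] at h
    exact Finset.mem_union_right _ (Finset.mem_filter.2 ⟨clos_mono_aux T hAB h.1, hB⟩)

lemma alnode_struct {P Q : Finset α} (h : AlNode T P Q) :
    P.Nonempty ∧ P ⊆ Q ∧
    (∀ q ∈ Q, ∃ p ∈ P, p ≤ q) ∧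
    (∀ p ∈ P, ext T (P.filter (· ≤ p)) ⊆ Q) ∧
    (∀ q ∈ Q, q ∉ P → q ∈ ext T (P.filter (· < q))) ∧
    (∀ p ∈ P, (∃ p' ∈ P, p' < p) → p ∉ ext T (P.filter (· < p))) := by
  induction h with
  | root i =>
    have hfle : ({i} : Finset α).filter (· ≤ i) = {i} := by
      apply Finset.filter_eq_self.2; intro x hx
      simp only [Finset.mem_singleton] at hx; simp [hx]
    refine ⟨Finset.singleton_nonempty i, ?_, ?_, ?_, ?_, ?_⟩
    · exact Finset.subset_union_left
    · intro q hq
      refine ⟨i, Finset.mem_singleton_self i, ?_⟩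
      rcases Finset.mem_union.1 hq with h | h
      · simp only [Finset.mem_singleton] at h; exact le_of_eq h.symm
      · exact le_of_lt ((Finset.mem_filter.1 h).2 i (Finset.mem_singleton_self i))
    · intro p hp
      simp only [Finset.mem_singleton] at hp; subst hp
      rw [hfle]
    · intro q hq hqP
      have hiq : i < q := by
        rcases Finset.mem_union.1 hq with h | h
        · exact absurd h hqP
        · exact (Finset.mem_filter.1 h).2 i (Finset.mem_singleton_self i)
      have : ({i} : Finset α).filter (· < q) = {i} := by
        apply Finset.filter_eq_self.2; intro x hx
        simp only [Finset.mem_singleton] at hx; simp [hx, hiq]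
      rw [this]; exact hq
    · intro p hp hex
      simp only [Finset.mem_singleton] at hp; subst hp
      obtain ⟨p', hp', hlt⟩ := hex
      simp only [Finset.mem_singleton] at hp'; subst hp'
      exact absurd hlt (lt_irrefl _)
  | @child P Q j h hj hjQ ih =>
    obtain ⟨hPne, hPQ, hb, hc, hd, he⟩ := ih
    have hjP : j ∉ P := fun hjP => absurd (hj j hjP) (lt_irrefl j)
    have hfilterj : (insert j P).filter (· ≤ j) = insert j P := by
      apply Finset.filter_eq_self.2; intro x hx
      rcases Finset.mem_insert.1 hx with rfl | hx
      · simp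
      · exact le_of_lt (hj x hx)
    have hfilterltj : (insert j P).filter (· < j) = P := by
      rw [Finset.filter_insert, if_neg (lt_irrefl j)]
      apply Finset.filter_eq_self.2; intro x hx; exact hj x hx
    refine ⟨Finset.insert_nonempty j P, ?_, ?_, ?_, ?_, ?_⟩
    · exact Finset.Subset.trans (Finset.subset_union_left) Finset.subset_union_left
    · intro q hq
      rcases Finset.mem_union.1 hq with h' | h'
      · rcases Finset.mem_union.1 h' with h'' | h''
        · exact ⟨q, h'', le_refl q⟩
        · obtain ⟨p, hp⟩ := hPne
          exact ⟨p, Finset.mem_insert_of_mem hp,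
            le_of_lt ((Finset.mem_filter.1 h'').2 p (Finset.mem_insert_of_mem hp))⟩
      · obtain ⟨p, hp, hpq⟩ := hb q h'
        exact ⟨p, Finset.mem_insert_of_mem hp, hpq⟩
    · intro p hp
      rcases Finset.mem_insert.1 hp with rfl | hp
      · rw [hfilterj]; exact Finset.subset_union_left
      · have : (insert j P).filter (· ≤ p) = P.filter (· ≤ p) := by
          rw [Finset.filter_insert, if_neg (not_le.2 (hj p hp))]
        rw [this]
        exact (hc p hp).trans Finset.subset_union_right
    · intro q hq hqP'
      rcases Finset.mem_union.1 hq with h' | h'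
      · -- q ∈ ext (insert j P), q ∉ insert j P
        have hq1 : q ∈ clos T (insert j P) ∧ ∀ x ∈ insert j P, x < q := by
          rcases Finset.mem_union.1 h' with h'' | h''
          · exact absurd h'' hqP'
          · exact Finset.mem_filter.1 h''
        have : (insert j P).filter (· < q) = insert j P := by
          apply Finset.filter_eq_self.2; exact hq1.2
        rw [this]; exact h'
      · -- q ∈ Q
        have hqP : q ∉ P := fun hqP => hqP' (Finset.mem_insert_of_mem hqP)
        have hdq := hd q h' hqP
        by_cases hjq : j < q
        · have heq : (insert j P).filter (· < q) = insert j ((P.filter (· < q))) := by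
            rw [Finset.filter_insert, if_pos hjq]
          rw [heq]
          refine ext_mono_aux T ?_ hdq ?_ ?_
          · intro x hx
            exact Finset.mem_insert_of_mem hx
          · intro hmem
            rcases Finset.mem_insert.1 hmem with h9 | hmem
            · exact hqP' (by rw [h9]; exact Finset.mem_insert_self j P)
            · exact hqP (Finset.mem_of_mem_filter q hmem)
          · intro x hx
            rcases Finset.mem_insert.1 hx with h9 | hx
            · rw [h9]; exact hjq
            · exact (Finset.mem_filter.1 hx).2
        · have heq : (insert j P).filter (· < q) = P.filter (· < q) := by
            rw [Finset.filter_insert, if_neg hjq]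
          rw [heq]; exact hdq
    · intro p hp hex
      rcases Finset.mem_insert.1 hp with hpj | hp
      · subst hpj
        rw [hfilterltj]
        intro hcon
        have hmax : P.filter (· ≤ P.max' hPne) = P := by
          apply Finset.filter_eq_self.2; intro x hx; exact Finset.le_max' P x hx
        have : ext T P ⊆ Q := by
          have := hc (P.max' hPne) (P.max'_mem hPne)
          rwa [hmax] at this
        exact hjQ (this hcon)
      · have : (insert j P).filter (· < p) = P.filter (· < p) := by
          rw [Finset.filter_insert, if_neg (asymm (hj p hp))]
        rw [this]
        apply he p hp
        obtain ⟨p', hp', hlt⟩ := hex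
        rcases Finset.mem_insert.1 hp' with hpj' | hp'
        · rw [hpj'] at hlt
          exact absurd (hj p hp) (asymm hlt)
        · exact ⟨p', hp', hlt⟩

lemma alnode_eq {P₁ Q₁ P₂ Q₂ Y : Finset α} (h₁ : AlNode T P₁ Q₁) (h₂ : AlNode T P₂ Q₂)
    (hP₁ : P₁ ⊆ Y) (hQ₁ : Y ⊆ Q₁) (hP₂ : P₂ ⊆ Y) (hQ₂ : Y ⊆ Q₂) : P₁ = P₂ := by
  obtain ⟨hne₁, -, hb₁, -, hd₁, he₁⟩ := alnode_struct T h₁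
  obtain ⟨hne₂, -, hb₂, -, hd₂, he₂⟩ := alnode_struct T h₂
  have hYne : Y.Nonempty := hne₁.mono hP₁
  set m := Y.min' hYne with hm
  have hmY : m ∈ Y := Y.min'_mem hYne
  have hmem : ∀ (P : Finset α), P ⊆ Y → (∀ q ∈ Y, ∃ p ∈ P, p ≤ q) → m ∈ P := by
    intro P hPY hbP
    obtain ⟨p, hp, hpm⟩ := hbP m hmY
    have : m ≤ p := Y.min'_le p (hPY hp)
    rwa [le_antisymm hpm this] at hp
  have hmP₁ : m ∈ P₁ := hmem P₁ hP₁ (fun q hq => hb₁ q (hQ₁ hq))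
  have hmP₂ : m ∈ P₂ := hmem P₂ hP₂ (fun q hq => hb₂ q (hQ₂ hq))
  have dir : ∀ (A B QB : Finset α), A ⊆ Y → Y ⊆ QB → m ∈ A → m ∈ B →
      (∀ q ∈ QB, q ∉ B → q ∈ ext T (B.filter (· < q))) →
      (∀ p ∈ A, (∃ p' ∈ A, p' < p) → p ∉ ext T (A.filter (· < p))) →
      ∀ q : α, A.filter (· < q) = B.filter (· < q) → q ∈ A → q ∈ B := by
    intro A B QB hAY hYQB hmA hmB hdB heA q hfil hqA
    by_contra hqB
    have hqY : q ∈ Y := hAY hqA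
    have hmq : m < q := by
      rcases lt_or_eq_of_le (Y.min'_le q hqY) with h | h
      · exact h
      · exact absurd (h ▸ hmB) hqB
    have h1 : q ∈ ext T (B.filter (· < q)) := hdB q (hYQB hqY) hqB
    rw [← hfil] at h1
    exact heA q hqA ⟨m, hmA, hmq⟩ h1
  have key : ∀ q : α, P₁.filter (· < q) = P₂.filter (· < q) → (q ∈ P₁ ↔ q ∈ P₂) :=
    fun q hfil => ⟨dir P₁ P₂ Q₂ hP₁ hQ₂ hmP₁ hmP₂ hd₂ he₁ q hfil,
      dir P₂ P₁ Q₁ hP₂ hQ₁ hmP₂ hmP₁ hd₁ he₂ q hfil.symm⟩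
  by_contra hne
  have hDne : ((P₁ \ P₂) ∪ (P₂ \ P₁)).Nonempty := by
    rw [Finset.nonempty_iff_ne_empty]
    intro hD
    apply hne
    rw [Finset.union_eq_empty, Finset.sdiff_eq_empty_iff_subset,
      Finset.sdiff_eq_empty_iff_subset] at hD
    exact Finset.Subset.antisymm hD.1 hD.2
  set D := (P₁ \ P₂) ∪ (P₂ \ P₁) with hD
  set q := D.min' hDne with hq
  have hqD : q ∈ D := D.min'_mem hDne
  have hfil : P₁.filter (· < q) = P₂.filter (· < q) := by
    apply Finset.ext
    intro x
    simp only [Finset.mem_filter]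
    constructor
    · rintro ⟨hx₁, hxq⟩
      refine ⟨?_, hxq⟩
      by_contra hx₂
      have : x ∈ D := Finset.mem_union_left _ (Finset.mem_sdiff.2 ⟨hx₁, hx₂⟩)
      exact absurd hxq (not_lt.2 (D.min'_le x this))
    · rintro ⟨hx₂, hxq⟩
      refine ⟨?_, hxq⟩
      by_contra hx₁
      have : x ∈ D := Finset.mem_union_right _ (Finset.mem_sdiff.2 ⟨hx₂, hx₁⟩)
      exact absurd hxq (not_lt.2 (D.min'_le x this))
  have hiff := key q hfil
  rcases Finset.mem_union.1 hqD with h | h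
  · obtain ⟨h1, h2⟩ := Finset.mem_sdiff.1 h
    exact h2 (hiff.1 h1)
  · obtain ⟨h1, h2⟩ := Finset.mem_sdiff.1 h
    exact h2 (hiff.2 h1)

end Aux

theorem stmt10 [Fintype ι] [Fintype α] [LinearOrder α] (T : ι → Finset α)
    (P₁ Q₁ P₂ Q₂ : Finset α) (h₁ : AlNode T P₁ Q₁) (h₂ : AlNode T P₂ Q₂)
    (hne : P₁ ≠ P₂) :
    ∀ Y : Finset α, ¬(P₁ ⊆ Y ∧ Y ⊆ Q₁ ∧ P₂ ⊆ Y ∧ Y ⊆ Q₂) := by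
  rintro Y ⟨hPY₁, hYQ₁, hPY₂, hYQ₂⟩
  exact hne (alnode_eq T h₁ h₂ hPY₁ hYQ₁ hPY₂ hYQ₂)
end

section
/- In the ALPINE extension, the maximum itemset S = R* ∪ Q of a child interval of (P, Q) with R = P ∪ {j} contains no item e with e < j, e ∉ P, and e ∉ Q; consequently, if S fails the closedness test S = I(T(R)), the witnessing item e ∈ I(T(R)) \ S satisfies e < tail(R), e ∉ R, and e ∉ Q. -/
open Finset

variable {ι α : Type*}

theorem stmt16 [Fintype ι] [Fintype α] [LinearOrder α] (T : ι → Finset α)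
    (P Q : Finset α) (hPQ : P ⊆ Q) (hcov : cover T P = cover T Q)
    (j : α) (hj : ∀ x ∈ P, x < j) (hjQ : j ∉ Q)
    (R : Finset α) (hR : R = insert j P)
    (Rstar : Finset α) (hRs : Rstar = R ∪ (clos T R).filter fun e => ∀ x ∈ R, x < e)
    (S : Finset α) (hS : S = Rstar ∪ Q) (hRcov : (cover T R).Nonempty) :
    (∀ e : α, e < j → e ∉ P → e ∉ Q → e ∉ S) ∧
    (S ≠ clos T R →
      ∃ e ∈ clos T R, e ∉ S ∧ e < j ∧ e ∉ R ∧ e ∉ Q) := by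
  have hPR : P ⊆ R := by rw [hR]; exact subset_insert _ _
  have hcovRP : cover T R ⊆ cover T P := by
    intro t ht
    simp only [cover, mem_filter] at ht ⊢
    exact ⟨ht.1, hPR.trans ht.2⟩
  have hRclos : R ⊆ clos T R := by
    intro x hx
    simp only [clos, mem_inf]
    intro t ht
    simp only [cover, mem_filter] at ht
    exact ht.2 hx
  have hQclos : Q ⊆ clos T R := by
    intro x hx
    simp only [clos, mem_inf]
    intro t ht
    have : t ∈ cover T Q := hcov ▸ hcovRP ht
    simp only [cover, mem_filter] at this
    exact this.2 hx
  have hSclos : S ⊆ clos T R := by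
    rw [hS, hRs]
    intro x hx
    rcases mem_union.1 hx with h | h
    · rcases mem_union.1 h with h | h
      · exact hRclos h
      · exact (mem_filter.1 h).1
    · exact hQclos h
  have part1 : ∀ e : α, e < j → e ∉ P → e ∉ Q → e ∉ S := by
    intro e hej heP heQ he
    rw [hS, hRs] at he
    rcases mem_union.1 he with h | h
    · rcases mem_union.1 h with h | h
      · rw [hR, mem_insert] at h
        rcases h with h | h
        · exact absurd h (ne_of_lt hej)
        · exact heP h
      · have := (mem_filter.1 h).2 j (by rw [hR]; exact mem_insert_self _ _)
        exact absurd hej (not_lt.2 this.le)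
    · exact heQ h
  refine ⟨part1, fun hne => ?_⟩
  obtain ⟨e, heclos, heS⟩ := exists_of_ssubset (lt_of_le_of_ne hSclos hne)
  have heR : e ∉ R := fun h => heS (by
    rw [hS, hRs]; exact mem_union_left _ (mem_union_left _ h))
  have heQ : e ∉ Q := fun h => heS (by rw [hS]; exact mem_union_right _ h)
  have hej : e < j := by
    by_contra hle
    push_neg at hle
    have hejne : e ≠ j := fun h => heR (by rw [hR, h]; exact mem_insert_self _ _)
    have hgt : j < e := lt_of_le_of_ne hle (Ne.symm hejne)
    apply heS
    rw [hS, hRs]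
    apply mem_union_left
    apply mem_union_right
    rw [mem_filter]
    refine ⟨heclos, fun x hx => ?_⟩
    rw [hR, mem_insert] at hx
    rcases hx with rfl | hx
    · exact hgt
    · exact (hj x hx).trans hgt
  exact ⟨e, heclos, heS, hej, heR, heQ⟩
end
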